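/- arXiv:1207.0229 — 5 statements merged into one kernel-verified Lean document; each statement's English description precedes it below -/
import Mathlib

section
/- Let K ≥ 1, let ρ₁, …, ρ_K be positive reals, let ν₁, …, ν_K be reals with 0 ≤ ν_k < 1 for all k, and let η* > 0 be a real number such that (1 − ν_k)/ρ_k ≤ η* for every k = 1, …, K. Then the throughput satisfies (1 − ∏_{k=1}^{K} ν_k) / (ρ₁ + Σ_{k=2}^{K} ρ_k·∏_{l=1}^{k−1} ν_l) ≤ η*. -/
/-!
Telescoping the failure probabilities gives
`1 - ∏ ν_k = ∑_k (1 - ν_k) ∏_{l<k} ν_l`: the success probability splits according to the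
attempt that succeeds first. Each term is at most `η* ρ_k ∏_{l<k} ν_l`, and summing these
bounds gives `η*` times the expected number of channel uses, which is the denominator.
-/

open Finset

theorem one_sub_prod_eq_sum_one_sub_mul_prod_lt {ι R : Type*} [LinearOrder ι] [CommRing R]
    (s : Finset ι) (ν : ι → R) :
    1 - ∏ i ∈ s, ν i = ∑ i ∈ s, (1 - ν i) * ∏ j ∈ s with j < i, ν j := by
  have h := prod_one_sub_ordered s (1 - ν ·)
  simp only [sub_sub_cancel] at h
  rw [h, sub_sub_cancel]

theorem one_sub_prod_le_mul_sum_mul_prod_lt {ι R : Type*} [LinearOrder ι] [CommRing R]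
    [PartialOrder R] [IsOrderedRing R] (s : Finset ι) (ρ ν : ι → R) (η : R)
    (hν : ∀ i ∈ s, 0 ≤ ν i) (h : ∀ i ∈ s, 1 - ν i ≤ η * ρ i) :
    1 - ∏ i ∈ s, ν i ≤ η * ∑ i ∈ s, ρ i * ∏ j ∈ s with j < i, ν j := by
  rw [one_sub_prod_eq_sum_one_sub_mul_prod_lt, mul_sum]
  refine sum_le_sum fun i hi => ?_
  rw [← mul_assoc]
  exact mul_le_mul_of_nonneg_right (h i hi) (prod_nonneg fun j hj => hν j (mem_filter.1 hj).1)

theorem Nat.Icc_filter_lt_eq_Icc_sub_one {a b k : ℕ} (hk₀ : 0 < k) (hkb : k ≤ b + 1) :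
    {l ∈ Icc a b | l < k} = Icc a (k - 1) := by
  ext l
  simp only [mem_filter, mem_Icc]
  omega

theorem sum_Icc_one_mul_prod_lt_eq {R : Type*} [CommSemiring R] {K : ℕ} (hK : 1 ≤ K)
    (ρ ν : ℕ → R) :
    ∑ k ∈ Icc 1 K, ρ k * ∏ l ∈ Icc 1 K with l < k, ν l =
      ρ 1 + ∑ k ∈ Icc 2 K, ρ k * ∏ l ∈ Icc 1 (k - 1), ν l := by
  rw [sum_congr rfl fun k hk => by
      rw [Nat.Icc_filter_lt_eq_Icc_sub_one (mem_Icc.1 hk).1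
        ((mem_Icc.1 hk).2.trans K.le_succ)],
    ← add_sum_Ioc_eq_sum_Icc hK, ← Icc_add_one_left_eq_Ioc]
  simp

theorem harqI_throughput_le_general (K : ℕ) (hK : 1 ≤ K) (ρ ν : ℕ → ℝ) (ηstar : ℝ)
    (hρ : ∀ k ∈ Finset.Icc 1 K, 0 < ρ k)
    (hν : ∀ k ∈ Finset.Icc 1 K, 0 ≤ ν k ∧ ν k < 1)
    (hopt : ∀ k ∈ Finset.Icc 1 K, (1 - ν k) / ρ k ≤ ηstar) :
    (1 - ∏ k ∈ Finset.Icc 1 K, ν k) /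
      (ρ 1 + ∑ k ∈ Finset.Icc 2 K, ρ k * ∏ l ∈ Finset.Icc 1 (k - 1), ν l) ≤ ηstar := by
  have hmem : 1 ∈ Icc 1 K := mem_Icc.2 ⟨le_rfl, hK⟩
  have hD : 0 < ρ 1 + ∑ k ∈ Icc 2 K, ρ k * ∏ l ∈ Icc 1 (k - 1), ν l := by
    refine add_pos_of_pos_of_nonneg (hρ 1 hmem) (sum_nonneg fun k hk => ?_)
    have hkK := (mem_Icc.1 hk).2
    exact mul_nonneg (hρ k (Icc_subset_Icc_left one_le_two hk)).le
      (prod_nonneg fun l hl => (hν l (Icc_subset_Icc_right (by omega) hl)).1)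
  rw [div_le_iff₀ hD, ← sum_Icc_one_mul_prod_lt_eq hK]
  exact one_sub_prod_le_mul_sum_mul_prod_lt _ ρ ν ηstar (fun k hk => (hν k hk).1)
    fun k hk => (div_le_iff₀ (hρ k hk)).1 (hopt k hk)

/-- Core inequality of Proposition 1: if each single-transmission throughput
`(1 − ν_k)/ρ_k` is bounded by `η*`, then the HARQ-I throughput is bounded by `η*`. -/
theorem harqI_throughput_le (K : ℕ) (hK : 1 ≤ K) (ρ ν : ℕ → ℝ) (ηstar : ℝ)
    (hρ : ∀ k ∈ Finset.Icc 1 K, 0 < ρ k)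
    (hν : ∀ k ∈ Finset.Icc 1 K, 0 ≤ ν k ∧ ν k < 1)
    (hη : 0 < ηstar)
    (hopt : ∀ k ∈ Finset.Icc 1 K, (1 - ν k) / ρ k ≤ ηstar) :
    (1 - ∏ k ∈ Finset.Icc 1 K, ν k) /
      (ρ 1 + ∑ k ∈ Finset.Icc 2 K, ρ k * ∏ l ∈ Finset.Icc 1 (k - 1), ν l) ≤ ηstar :=
  harqI_throughput_le_general K hK ρ ν ηstar hρ hν hopt
end

section
/- Let ν : (0,∞) → (0,1) be a function, let ρ̂ > 0, set η̂ = (1 − ν(ρ̂))/ρ̂, and assume that (1 − ν(ρ))/ρ < η̂ for every ρ > 0 with ρ ≠ ρ̂. Then for every K ≥ 1 and every tuple of positive reals ρ₁, …, ρ_K in which ρ_j ≠ ρ̂ for at least one index j, the strict inequality (1 − ∏_{k=1}^{K} ν(ρ_k)) / (ρ₁ + Σ_{k=2}^{K} ρ_k·∏_{l=1}^{k−1} ν(ρ_l)) < η̂ holds. -/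
open Finset

/-!
Write `P k = ν(ρ₁)⋯ν(ρ_k)` for the probability that the first `k` attempts all fail. The numerator
telescopes, `1 - P K = ∑ₖ P (k-1) (1 - ν(ρ_k))`, and the denominator is `∑ₖ ρ_k P (k-1)`. Since
`1 - ν(ρ) ≤ η̂ ρ` for every `ρ > 0`, strictly when `ρ ≠ ρ̂`, and every weight `P (k-1)` is positive,
the numerator is strictly below `η̂` times the denominator.
-/

theorem one_sub_prod_Icc_eq_sum {R : Type*} [CommRing R] (x : ℕ → R) (K : ℕ) :
    1 - ∏ k ∈ Icc 1 K, x k = ∑ k ∈ Icc 1 K, (∏ l ∈ Icc 1 (k - 1), x l) * (1 - x k) := by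
  induction K with
  | zero => simp
  | succ K ih =>
    rw [sum_Icc_succ_top (by omega), prod_Icc_succ_top (by omega), ← sub_add_sub_cancel, ih,
      Nat.add_sub_cancel]
    ring

theorem add_sum_Icc_two_eq_sum_Icc_one {M : Type*} [AddCommMonoid M] (f : ℕ → M) {K : ℕ}
    (hK : 1 ≤ K) : f 1 + ∑ k ∈ Icc 2 K, f k = ∑ k ∈ Icc 1 K, f k := by
  rw [← add_sum_Ioc_eq_sum_Icc hK, ← Icc_add_one_left_eq_Ioc]
  rfl

theorem sum_div_sum_lt_of_le_of_exists_lt {ι 𝕜 : Type*} [Field 𝕜] [LinearOrder 𝕜]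
    [IsStrictOrderedRing 𝕜] {s : Finset ι} {a b : ι → 𝕜} {c : 𝕜}
    (hb : 0 < ∑ i ∈ s, b i) (hle : ∀ i ∈ s, a i ≤ c * b i) (hlt : ∃ i ∈ s, a i < c * b i) :
    (∑ i ∈ s, a i) / ∑ i ∈ s, b i < c := by
  rw [div_lt_iff₀ hb, mul_sum]
  exact sum_lt_sum hle hlt

theorem harqI_unique_maximizer_general (ν : ℝ → ℝ) (ρhat : ℝ) (ηhat : ℝ)
    (hν : ∀ ρ : ℝ, 0 < ρ → 0 < ν ρ ∧ ν ρ < 1)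
    (hηhat : ηhat = (1 - ν ρhat) / ρhat)
    (hmax : ∀ ρ : ℝ, 0 < ρ → ρ ≠ ρhat → (1 - ν ρ) / ρ < ηhat) :
    ∀ (K : ℕ), 1 ≤ K → ∀ ρ : ℕ → ℝ,
      (∀ k ∈ Finset.Icc 1 K, 0 < ρ k) →
      (∃ j ∈ Finset.Icc 1 K, ρ j ≠ ρhat) →
      (1 - ∏ k ∈ Finset.Icc 1 K, ν (ρ k)) /
        (ρ 1 + ∑ k ∈ Finset.Icc 2 K, ρ k * ∏ l ∈ Finset.Icc 1 (k - 1), ν (ρ l))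
        < ηhat := by
  intro K hK ρ hρ ⟨j, hj, hjne⟩
  set P : ℕ → ℝ := fun k ↦ ∏ l ∈ Icc 1 k, ν (ρ l)
  have hP : ∀ k ∈ Icc 1 K, 0 < P (k - 1) := fun k hk ↦ prod_pos fun l hl ↦
    (hν _ (hρ l (by simp only [mem_Icc] at hk hl ⊢; omega))).1
  have hlt : ∀ r, 0 < r → r ≠ ρhat → 1 - ν r < ηhat * r := fun r hr hne ↦
    (div_lt_iff₀ hr).mp (hmax r hr hne)
  have hle : ∀ r, 0 < r → 1 - ν r ≤ ηhat * r := fun r hr ↦ by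
    rcases eq_or_ne r ρhat with rfl | hne
    · rw [hηhat, div_mul_cancel₀ _ hr.ne']
    · exact (hlt r hr hne).le
  have hden : ρ 1 + ∑ k ∈ Icc 2 K, ρ k * P (k - 1) = ∑ k ∈ Icc 1 K, ρ k * P (k - 1) := by
    rw [← add_sum_Icc_two_eq_sum_Icc_one _ hK]
    simp [P]
  rw [one_sub_prod_Icc_eq_sum, hden]
  refine sum_div_sum_lt_of_le_of_exists_lt
    (sum_pos (fun k hk ↦ mul_pos (hρ k hk) (hP k hk)) ⟨1, by simpa using hK⟩)
    (fun k hk ↦ ?_) ⟨j, hj, ?_⟩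
  · exact (mul_le_mul_of_nonneg_left (hle _ (hρ k hk)) (hP k hk).le).trans_eq (by ring)
  · exact (mul_lt_mul_of_pos_left (hlt _ (hρ j hj) hjne) (hP j hj)).trans_eq (by ring)

/-- Uniqueness part of Proposition 1: if `ρ̂` is the unique maximizer of the
single-transmission throughput `(1 − ν(ρ))/ρ`, then any variable-rate allocation
with at least one `ρ_j ≠ ρ̂` achieves a strictly smaller HARQ-I throughput than
`η̂ = (1 − ν(ρ̂))/ρ̂`. -/
theorem harqI_unique_maximizer (ν : ℝ → ℝ) (ρhat : ℝ) (ηhat : ℝ)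
    (hν : ∀ ρ : ℝ, 0 < ρ → 0 < ν ρ ∧ ν ρ < 1)
    (hρhat : 0 < ρhat)
    (hηhat : ηhat = (1 - ν ρhat) / ρhat)
    (hmax : ∀ ρ : ℝ, 0 < ρ → ρ ≠ ρhat → (1 - ν ρ) / ρ < ηhat) :
    ∀ (K : ℕ), 1 ≤ K → ∀ ρ : ℕ → ℝ,
      (∀ k ∈ Finset.Icc 1 K, 0 < ρ k) →
      (∃ j ∈ Finset.Icc 1 K, ρ j ≠ ρhat) →
      (1 - ∏ k ∈ Finset.Icc 1 K, ν (ρ k)) /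
        (ρ 1 + ∑ k ∈ Finset.Icc 2 K, ρ k * ∏ l ∈ Finset.Icc 1 (k - 1), ν (ρ l))
        < ηhat :=
  harqI_unique_maximizer_general ν ρhat ηhat hν hηhat hmax
end

section
/- Let Q(x) = (1/√(2π))·∫_x^∞ exp(−t²/2) dt be the Gaussian Q-function. Let K ≥ 1, ξ > 0, and let ρ'₁, …, ρ'_K be positive reals; set X_k = Σ_{l=1}^{k} ρ'_l and Y_k = √(Σ_{l=1}^{k} (ρ'_l)²), and define f̃_k = Q(ξ·(X_k − 1)/Y_k) and f̌_k = Q(ξ·(1 − 1/X_k)). If X_k ≥ 1 for all k = 1, …, K, then (1 − f̃_K)/(ρ'₁ + Σ_{k=2}^{K} ρ'_k·f̃_{k−1}) ≥ (1 − f̌_K)/(ρ'₁ + Σ_{k=2}^{K} ρ'_k·f̌_{k−1}). -/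
open Finset

/-- The Gaussian Q-function: the tail of the standard normal distribution. -/
noncomputable def gaussQ (x : ℝ) : ℝ :=
  (Real.sqrt (2 * Real.pi))⁻¹ * ∫ t in Set.Ioi x, Real.exp (-t ^ 2 / 2)

/-! Since `√(∑ ρ'ₗ²) ≤ ∑ ρ'ₗ`, i.e. `Y_k ≤ X_k`, and `X_k ≥ 1`, the argument `ξ (X_k - 1) / Y_k` of
`f̃_k` dominates the argument `ξ (X_k - 1) / X_k` of `f̌_k`; as `Q` is antitone, `f̃_k ≤ f̌_k`.
Lowering the failure probabilities raises the numerator `1 - f_K` and lowers the denominator of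
the throughput, so `η̌ ≤ η̃`. -/

open Real MeasureTheory

lemma integrable_exp_neg_sq_div_two : Integrable fun t : ℝ => exp (-t ^ 2 / 2) := by
  convert integrable_exp_neg_mul_sq (b := 1 / 2) (by norm_num) using 2 with t
  ring_nf

lemma integral_exp_neg_sq_div_two : ∫ t : ℝ, exp (-t ^ 2 / 2) = √(2 * π) := by
  convert integral_gaussian (1 / 2) using 2
  · ext t; ring_nf
  · ring

lemma gaussQ_nonneg (x : ℝ) : 0 ≤ gaussQ x :=
  mul_nonneg (by positivity) (setIntegral_nonneg measurableSet_Ioi fun t _ => (exp_pos _).le)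

lemma gaussQ_le_one (x : ℝ) : gaussQ x ≤ 1 := by
  rw [gaussQ, inv_mul_le_iff₀ (by positivity), mul_one, ← integral_exp_neg_sq_div_two]
  exact setIntegral_le_integral integrable_exp_neg_sq_div_two
    (.of_forall fun t => (exp_pos _).le)

lemma gaussQ_antitone : Antitone gaussQ := fun x y hxy =>
  mul_le_mul_of_nonneg_left
    (setIntegral_mono_set integrable_exp_neg_sq_div_two.integrableOn
      (.of_forall fun t => (exp_pos _).le) (.of_forall (Set.Ioi_subset_Ioi hxy)))
    (by positivity)

lemma sqrt_sum_sq_le_sum {ι : Type*} {s : Finset ι} {f : ι → ℝ} (hf : ∀ i ∈ s, 0 ≤ f i) :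
    √(∑ i ∈ s, f i ^ 2) ≤ ∑ i ∈ s, f i :=
  (sqrt_le_left (sum_nonneg hf)).2 (sum_sq_le_sq_sum_of_nonneg hf)

lemma mul_one_sub_one_div_le_mul_sub_one_div {c x y : ℝ} (hc : 0 ≤ c) (hx : 1 ≤ x) (hy : 0 < y)
    (hyx : y ≤ x) : c * (1 - 1 / x) ≤ c * (x - 1) / y := by
  rw [show c * (1 - 1 / x) = c * (x - 1) / x by field_simp]
  exact div_le_div_of_nonneg_left (mul_nonneg hc (by linarith)) hy hyx

lemma gaussQ_div_sqrt_sum_sq_le {ι : Type*} {s : Finset ι} {ρ : ι → ℝ} {ξ : ℝ} (hξ : 0 ≤ ξ)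
    (hρ : ∀ i ∈ s, 0 < ρ i) (hX : 1 ≤ ∑ i ∈ s, ρ i) :
    gaussQ (ξ * (∑ i ∈ s, ρ i - 1) / √(∑ i ∈ s, ρ i ^ 2)) ≤
      gaussQ (ξ * (1 - 1 / ∑ i ∈ s, ρ i)) := by
  obtain ⟨i, hi, -⟩ := exists_ne_zero_of_sum_ne_zero (by linarith : ∑ i ∈ s, ρ i ≠ 0)
  have hY : 0 < √(∑ i ∈ s, ρ i ^ 2) :=
    sqrt_pos.2 (sum_pos (fun j hj => pow_pos (hρ j hj) 2) ⟨i, hi⟩)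
  exact gaussQ_antitone (mul_one_sub_one_div_le_mul_sub_one_div hξ hX hY
    (sqrt_sum_sq_le_sum fun j hj => (hρ j hj).le))

/-- `f k` is the probability of failure after `k` attempts and `ρ k` the redundancy of the
`k`-th attempt. -/
noncomputable def harqThroughput (ρ f : ℕ → ℝ) (K : ℕ) : ℝ :=
  (1 - f K) / (ρ 1 + ∑ k ∈ Icc 2 K, ρ k * f (k - 1))

lemma harqThroughput_le_of_le {ρ f g : ℕ → ℝ} {K : ℕ} (hK : 1 ≤ K)
    (hρ : ∀ k ∈ Icc 1 K, 0 < ρ k) (hf₀ : ∀ k ∈ Icc 1 K, 0 ≤ f k) (hf₁ : f K ≤ 1)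
    (hfg : ∀ k ∈ Icc 1 K, f k ≤ g k) :
    harqThroughput ρ g K ≤ harqThroughput ρ f K := by
  have hρ₂ : ∀ k ∈ Icc 2 K, 0 < ρ k ∧ k - 1 ∈ Icc 1 K := fun k hk => by
    rw [mem_Icc] at hk
    exact ⟨hρ k (mem_Icc.2 ⟨by omega, hk.2⟩), mem_Icc.2 ⟨by omega, by omega⟩⟩
  have hK' : K ∈ Icc 1 K := mem_Icc.2 ⟨hK, le_rfl⟩
  refine div_le_div₀ (by linarith) (by linarith [hfg K hK']) ?_ ?_
  · refine add_pos_of_pos_of_nonneg (hρ 1 (mem_Icc.2 ⟨le_rfl, hK⟩)) (sum_nonneg fun k hk => ?_)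
    exact mul_nonneg (hρ₂ k hk).1.le (hf₀ _ (hρ₂ k hk).2)
  · gcongr with k hk
    exacts [(hρ₂ k hk).1.le, hfg _ (hρ₂ k hk).2]

/-- Proposition 2: the Gaussian-approximated throughput of truncated HARQ-IR is
lower-bounded by the expression obtained by replacing each `f̃_k = Q(ξ(X_k−1)/Y_k)`
with `f̌_k = Q(ξ(1 − 1/X_k))`. -/
theorem harqIR_throughput_lower_bound (K : ℕ) (hK : 1 ≤ K) (ξ : ℝ) (hξ : 0 < ξ)
    (ρ' : ℕ → ℝ) (hρ' : ∀ l ∈ Finset.Icc 1 K, 0 < ρ' l)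
    (X Y ftil fchk : ℕ → ℝ)
    (hX : ∀ k, X k = ∑ l ∈ Finset.Icc 1 k, ρ' l)
    (hY : ∀ k, Y k = Real.sqrt (∑ l ∈ Finset.Icc 1 k, (ρ' l) ^ 2))
    (hftil : ∀ k, ftil k = gaussQ (ξ * (X k - 1) / Y k))
    (hfchk : ∀ k, fchk k = gaussQ (ξ * (1 - 1 / X k)))
    (hX1 : ∀ k ∈ Finset.Icc 1 K, 1 ≤ X k) :
    (1 - fchk K) / (ρ' 1 + ∑ k ∈ Finset.Icc 2 K, ρ' k * fchk (k - 1)) ≤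
      (1 - ftil K) / (ρ' 1 + ∑ k ∈ Finset.Icc 2 K, ρ' k * ftil (k - 1)) := by
  have hfail : ∀ k ∈ Icc 1 K, ftil k ≤ fchk k := fun k hk => by
    rw [hftil, hfchk, hX, hY]
    exact gaussQ_div_sqrt_sum_sq_le hξ.le
      (fun l hl => hρ' l (Icc_subset_Icc_right (mem_Icc.1 hk).2 hl)) (hX k ▸ hX1 k hk)
  exact harqThroughput_le_of_le hK hρ' (fun k _ => hftil k ▸ gaussQ_nonneg _)
    (hftil K ▸ gaussQ_le_one _) hfail
end

section
/- Let k ≥ 1, let 0 = ρ₀ ≤ ρ₁ ≤ ρ₂ ≤ … ≤ ρ_k be reals and let γ₁, …, γ_k be nonnegative reals. Then Σ_{l=1}^{k} (ρ_l − ρ_{l−1})·log₂(1 + Σ_{f=l}^{k} γ_f) ≤ Σ_{l=1}^{k} ρ_l·log₂(1 + γ_l). -/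
/-!
Summation by parts turns the Chase-combining sum into `Σ_l ρ_l (B_l − B_{l+1})` with
`B_l = log₂(1 + Σ_{f ≥ l} γ_f)` and `B_{k+1} = 0`. Each increment is at most `log₂(1 + γ_l)`
because `1 + a + b ≤ (1 + a)(1 + b)` for `a, b ≥ 0`, and the weights `ρ_l` are nonnegative.
-/

open Finset

theorem Finset.sum_Icc_sub_mul_eq_sum_Icc_mul_sub {R : Type*} [CommRing R] (a b : ℕ → R)
    (ha : a 0 = 0) (k : ℕ) :
    ∑ l ∈ Icc 1 k, (a l - a (l - 1)) * b l
      = ∑ l ∈ Icc 1 k, a l * (b l - b (l + 1)) + a k * b (k + 1) := by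
  induction k with
  | zero => simp [ha]
  | succ n ih =>
    rw [sum_Icc_succ_top (Nat.le_add_left 1 n), sum_Icc_succ_top (Nat.le_add_left 1 n), ih,
      Nat.add_sub_cancel]
    ring

theorem Real.logb_one_add_add_le {base a b : ℝ} (hbase : 1 < base) (ha : 0 ≤ a) (hb : 0 ≤ b) :
    Real.logb base (1 + a + b) ≤ Real.logb base (1 + a) + Real.logb base (1 + b) := by
  rw [← Real.logb_mul (by positivity) (by positivity)]
  exact Real.logb_le_logb_of_le hbase (by positivity) (by nlinarith)

theorem chase_le_ir_mutual_information_general (k : ℕ) (ρ γ : ℕ → ℝ)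
    (hρ0 : ρ 0 = 0)
    (hρmono : ∀ l, 1 ≤ l → l ≤ k → ρ (l - 1) ≤ ρ l)
    (hγ : ∀ l ∈ Finset.Icc 1 k, 0 ≤ γ l) :
    ∑ l ∈ Finset.Icc 1 k, (ρ l - ρ (l - 1)) *
        Real.logb 2 (1 + ∑ f ∈ Finset.Icc l k, γ f) ≤
      ∑ l ∈ Finset.Icc 1 k, ρ l * Real.logb 2 (1 + γ l) := by
  have hρ : MonotoneOn ρ (Set.Icc 0 k) := monotoneOn_of_le_succ Set.ordConnected_Icc
    fun l _ _ hl ↦ by simpa using hρmono (l + 1) (by omega) hl.2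
  set B : ℕ → ℝ := fun l ↦ Real.logb 2 (1 + ∑ f ∈ Icc l k, γ f)
  have hB_top : B (k + 1) = 0 := by simp [B]
  rw [sum_Icc_sub_mul_eq_sum_Icc_mul_sub ρ B hρ0, hB_top, mul_zero, add_zero]
  refine sum_le_sum fun l hl ↦ ?_
  have hlk : l ≤ k := (mem_Icc.mp hl).2
  have hρl : 0 ≤ ρ l := hρ0 ▸ hρ (by simp) (by simp [hlk]) (Nat.zero_le l)
  have htail : 0 ≤ ∑ f ∈ Icc (l + 1) k, γ f :=
    sum_nonneg fun f hf ↦ hγ f (Icc_subset_Icc (by omega) le_rfl hf)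
  have hB_step : B l = Real.logb 2 (1 + γ l + ∑ f ∈ Icc (l + 1) k, γ f) := by
    rw [Icc_add_one_left_eq_Ioc, add_assoc, add_sum_Ioc_eq_sum_Icc hlk]
  refine mul_le_mul_of_nonneg_left ?_ hρl
  have := Real.logb_one_add_add_le one_lt_two (hγ l hl) htail
  rw [hB_step]
  linarith

/-- Chase combining accumulates less mutual information than incremental redundancy:
`Σ_{l=1}^{k} (ρ_l − ρ_{l−1})·log₂(1 + Σ_{f=l}^{k} γ_f) ≤ Σ_{l=1}^{k} ρ_l·log₂(1 + γ_l)`. -/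
theorem chase_le_ir_mutual_information (k : ℕ) (hk : 1 ≤ k) (ρ γ : ℕ → ℝ)
    (hρ0 : ρ 0 = 0)
    (hρmono : ∀ l, 1 ≤ l → l ≤ k → ρ (l - 1) ≤ ρ l)
    (hγ : ∀ l ∈ Finset.Icc 1 k, 0 ≤ γ l) :
    ∑ l ∈ Finset.Icc 1 k, (ρ l - ρ (l - 1)) *
        Real.logb 2 (1 + ∑ f ∈ Finset.Icc l k, γ f) ≤
      ∑ l ∈ Finset.Icc 1 k, ρ l * Real.logb 2 (1 + γ l) :=
  chase_le_ir_mutual_information_general k ρ γ hρ0 hρmono hγ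
end

section
/- Let (Ω, ℱ, P) be a probability space, let γ₁, …, γ_k be independent nonnegative real-valued random variables, and let 0 = ρ₀ ≤ ρ₁ ≤ ρ₂ ≤ … ≤ ρ_k be reals with ρ₁ > 0. Then P(Σ_{l=1}^{k} ρ_l·log₂(1 + γ_l) < 1) ≤ P(Σ_{l=1}^{k} (ρ_l − ρ_{l−1})·log₂(1 + Σ_{f=l}^{k} γ_f) < 1) ≤ ∏_{l=1}^{k} P(ρ_l·log₂(1 + γ_l) < 1). -/
/-!
Pointwise, for every realisation of the SNRs, the Chase-combining information lies between the
single-attempt informations and the incremental-redundancy information. Writing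
`C(x) = log₂(1 + x)`, subadditivity of `C` on `[0, ∞)` bounds `C(γ_l + ⋯ + γ_k)` by
`C(γ_l) + ⋯ + C(γ_k)`, and exchanging the order of summation telescopes the redundancy increments
back to `ρ_f`; monotonicity of `C` shows instead that `ρ_l · C(γ_l)` is dominated by the first
`l` terms of the Chase-combining sum. So the failure events are nested, and the event that every
single attempt fails has probability `∏ P(ρ_l · C(γ_l) < 1)` by independence.
-/

open Finset MeasureTheory ProbabilityTheory

namespace Real

theorem logb_one_add_add_le_s11 {b x y : ℝ} (hb : 1 < b) (hx : 0 ≤ x) (hy : 0 ≤ y) :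
    logb b (1 + (x + y)) ≤ logb b (1 + x) + logb b (1 + y) := by
  rw [← logb_mul (by positivity) (by positivity)]
  exact logb_le_logb_of_le hb (by positivity) (by nlinarith)

theorem monotoneOn_logb_one_add {b : ℝ} (hb : 1 < b) :
    MonotoneOn (fun x => logb b (1 + x)) (Set.Ici 0) := fun x hx _ _ hxy =>
  logb_le_logb_of_le hb (by rw [Set.mem_Ici] at hx; positivity) (by linarith)

end Real

theorem sum_Icc_one_sub_pred (ρ : ℕ → ℝ) (n : ℕ) :
    ∑ j ∈ Icc 1 n, (ρ j - ρ (j - 1)) = ρ n - ρ 0 := by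
  induction n with
  | zero => simp
  | succ n ih => rw [sum_Icc_succ_top (by omega), ih, Nat.add_sub_cancel]; ring

theorem sum_Icc_mul_sum_Icc_comm (d b : ℕ → ℝ) (k : ℕ) :
    ∑ j ∈ Icc 1 k, d j * ∑ f ∈ Icc j k, b f = ∑ f ∈ Icc 1 k, b f * ∑ j ∈ Icc 1 f, d j := by
  simp_rw [mul_sum]
  rw [sum_comm' (s' := fun f => Icc 1 f) (t' := Icc 1 k)]
  · simp_rw [mul_comm]
  · intro j f
    simp only [mem_Icc]
    omega

section HARQ

variable (φ : ℝ → ℝ) (ρ a : ℕ → ℝ) (k : ℕ)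

-- `φ` is the rate function (`C(x) = log₂(1 + x)` in the application) and `a l` the SNR of attempt `l`.
def incrementalRedundancyInfo : ℝ :=
  ∑ l ∈ Icc 1 k, ρ l * φ (a l)

def chaseCombiningInfo : ℝ :=
  ∑ l ∈ Icc 1 k, (ρ l - ρ (l - 1)) * φ (∑ f ∈ Icc l k, a f)

variable {φ ρ a k}

theorem chaseCombiningInfo_le_incrementalRedundancyInfo (hφ0 : φ 0 ≤ 0)
    (hφadd : ∀ x y, 0 ≤ x → 0 ≤ y → φ (x + y) ≤ φ x + φ y) (ha : ∀ l, 0 ≤ a l)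
    (hρ0 : ρ 0 = 0) (hρmono : ∀ l, 1 ≤ l → l ≤ k → ρ (l - 1) ≤ ρ l) :
    chaseCombiningInfo φ ρ a k ≤ incrementalRedundancyInfo φ ρ a k := by
  have hφsum (j : ℕ) : φ (∑ f ∈ Icc j k, a f) ≤ ∑ f ∈ Icc j k, φ (a f) :=
    le_sum_of_subadditive_on_pred φ (0 ≤ ·) hφ0 hφadd (fun _ _ => add_nonneg) a fun f _ => ha f
  calc chaseCombiningInfo φ ρ a k
      ≤ ∑ j ∈ Icc 1 k, (ρ j - ρ (j - 1)) * ∑ f ∈ Icc j k, φ (a f) := by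
        refine sum_le_sum fun j hj => mul_le_mul_of_nonneg_left (hφsum j) ?_
        rw [mem_Icc] at hj
        exact sub_nonneg.2 (hρmono j hj.1 hj.2)
    _ = ∑ f ∈ Icc 1 k, φ (a f) * ∑ j ∈ Icc 1 f, (ρ j - ρ (j - 1)) :=
        sum_Icc_mul_sum_Icc_comm _ _ k
    _ = incrementalRedundancyInfo φ ρ a k := by
        simp_rw [sum_Icc_one_sub_pred, hρ0, sub_zero, mul_comm]
        rfl

theorem mul_le_chaseCombiningInfo (hφ0 : 0 ≤ φ 0) (hφmono : MonotoneOn φ (Set.Ici 0))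
    (ha : ∀ l, 0 ≤ a l) (hρ0 : ρ 0 = 0) (hρmono : ∀ l, 1 ≤ l → l ≤ k → ρ (l - 1) ≤ ρ l)
    {l : ℕ} (hl : l ∈ Icc 1 k) :
    ρ l * φ (a l) ≤ chaseCombiningInfo φ ρ a k := by
  rw [mem_Icc] at hl
  have hd {j : ℕ} (hj : j ∈ Icc 1 k) : 0 ≤ ρ j - ρ (j - 1) := by
    rw [mem_Icc] at hj
    exact sub_nonneg.2 (hρmono j hj.1 hj.2)
  have hS (j : ℕ) : 0 ≤ ∑ f ∈ Icc j k, a f := sum_nonneg fun f _ => ha f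
  have hsub : Icc 1 l ⊆ Icc 1 k := Icc_subset_Icc_right hl.2
  calc ρ l * φ (a l) = ∑ j ∈ Icc 1 l, (ρ j - ρ (j - 1)) * φ (a l) := by
        rw [← sum_mul, sum_Icc_one_sub_pred, hρ0, sub_zero]
    _ ≤ ∑ j ∈ Icc 1 l, (ρ j - ρ (j - 1)) * φ (∑ f ∈ Icc j k, a f) := by
        refine sum_le_sum fun j hj => mul_le_mul_of_nonneg_left ?_ (hd (hsub hj))
        have hlj : l ∈ Icc j k := mem_Icc.2 ⟨(mem_Icc.1 hj).2, hl.2⟩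
        exact hφmono (ha l) (hS j) (single_le_sum (fun f _ => ha f) hlj)
    _ ≤ chaseCombiningInfo φ ρ a k :=
        sum_le_sum_of_subset_of_nonneg hsub fun j hj _ =>
          mul_nonneg (hd hj) (hφ0.trans (hφmono Set.self_mem_Ici (hS j) (hS j)))

end HARQ

theorem harq_failure_ordering_general {Ω : Type*} [MeasurableSpace Ω]
    (P : Measure Ω) [IsProbabilityMeasure P]
    (k : ℕ) (γ : ℕ → Ω → ℝ)
    (hindep : iIndepFun γ P)
    (hnonneg : ∀ l, ∀ ω, 0 ≤ γ l ω)
    (ρ : ℕ → ℝ) (hρ0 : ρ 0 = 0)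
    (hρmono : ∀ l, 1 ≤ l → l ≤ k → ρ (l - 1) ≤ ρ l) :
    P {ω | ∑ l ∈ Finset.Icc 1 k, ρ l * Real.logb 2 (1 + γ l ω) < 1} ≤
        P {ω | ∑ l ∈ Finset.Icc 1 k, (ρ l - ρ (l - 1)) *
            Real.logb 2 (1 + ∑ f ∈ Finset.Icc l k, γ f ω) < 1} ∧
      P {ω | ∑ l ∈ Finset.Icc 1 k, (ρ l - ρ (l - 1)) *
            Real.logb 2 (1 + ∑ f ∈ Finset.Icc l k, γ f ω) < 1} ≤
        ∏ l ∈ Finset.Icc 1 k, P {ω | ρ l * Real.logb 2 (1 + γ l ω) < 1} := by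
  set C : ℝ → ℝ := fun x => Real.logb 2 (1 + x)
  have hC0 : C 0 = 0 := by simp [C]
  have hCadd (x y : ℝ) (hx : 0 ≤ x) (hy : 0 ≤ y) : C (x + y) ≤ C x + C y :=
    Real.logb_one_add_add_le_s11 one_lt_two hx hy
  have hCmono : MonotoneOn C (Set.Ici 0) := Real.monotoneOn_logb_one_add one_lt_two
  refine ⟨measure_mono fun ω hω => ?_, ?_⟩
  · exact (chaseCombiningInfo_le_incrementalRedundancyInfo hC0.le hCadd (hnonneg · ω) hρ0
      hρmono).trans_lt hω
  · have hsingle (l : ℕ) : MeasurableSet {x | ρ l * C x < 1} :=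
      measurableSet_lt (by unfold C Real.logb; fun_prop) measurable_const
    calc _ ≤ P (⋂ l ∈ Icc 1 k, γ l ⁻¹' {x | ρ l * C x < 1}) :=
          measure_mono fun ω hω => Set.mem_iInter₂.2 fun l hl =>
            (mul_le_chaseCombiningInfo hC0.ge hCmono (hnonneg · ω) hρ0 hρmono hl).trans_lt hω
      _ = _ := hindep.meas_biInter fun l _ => ⟨_, hsingle l, rfl⟩

/-- The ordering `f_IR,k ≤ f_CH,k ≤ f_I,k` of the decoding-failure probabilities of
incremental-redundancy, Chase-combining, and type-I HARQ over an independently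
block-fading channel, for nondecreasing redundancies. -/
theorem harq_failure_ordering {Ω : Type*} [MeasurableSpace Ω]
    (P : Measure Ω) [IsProbabilityMeasure P]
    (k : ℕ) (hk : 1 ≤ k) (γ : ℕ → Ω → ℝ)
    (hmeas : ∀ l, Measurable (γ l))
    (hindep : iIndepFun γ P)
    (hnonneg : ∀ l, ∀ ω, 0 ≤ γ l ω)
    (ρ : ℕ → ℝ) (hρ0 : ρ 0 = 0) (hρ1 : 0 < ρ 1)
    (hρmono : ∀ l, 1 ≤ l → l ≤ k → ρ (l - 1) ≤ ρ l) :
    P {ω | ∑ l ∈ Finset.Icc 1 k, ρ l * Real.logb 2 (1 + γ l ω) < 1} ≤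
        P {ω | ∑ l ∈ Finset.Icc 1 k, (ρ l - ρ (l - 1)) *
            Real.logb 2 (1 + ∑ f ∈ Finset.Icc l k, γ f ω) < 1} ∧
      P {ω | ∑ l ∈ Finset.Icc 1 k, (ρ l - ρ (l - 1)) *
            Real.logb 2 (1 + ∑ f ∈ Finset.Icc l k, γ f ω) < 1} ≤
        ∏ l ∈ Finset.Icc 1 k, P {ω | ρ l * Real.logb 2 (1 + γ l ω) < 1} :=
  harq_failure_ordering_general P k γ hindep hnonneg ρ hρ0 hρmono
end
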